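/- arXiv:1710.09784 — 4 statements merged into one kernel-verified Lean document; each statement's English description precedes it below -/
import Mathlib

section
/- Let B be a small category, G = Set^B, I a finite directed multigraph, D : I → G a diagram, and κ : D ⇒ ΔS a colimiting cocone. If I contains a directed cycle p = (i₀ →^{d₀} i₁ →^{d₁} … →^{d_{n−1}} i_n = i₀) and for some X ∈ B the set D_{i₀}(X) is finite and non-empty, then κ is not a Van Kampen cocone: there exist y ∈ D_{i₀}(X) and k ≥ 1 with D_p^k(y) = y (where D_p = D_{d_{n−1}} ∘ … ∘ D_{d₀}), giving a non-empty proper mapping path of sort X connecting y with itself, which together with the empty path gives two different proper mapping paths from y to y. -/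
open CategoryTheory CategoryTheory.Limits

universe u

/-- A directed multigraph. -/
structure MGraph : Type (u + 1) where
  V : Type u
  E : Type u
  s : E → V
  t : E → V

/-- A diagram of shape a directed multigraph `I` in a category `C`
(a graph morphism into the underlying graph of `C`). -/
structure GDiagram (I : MGraph.{u}) (C : Type*) [Category C] where
  obj : I.V → C
  map : (e : I.E) → obj (I.s e) ⟶ obj (I.t e)

section Core

variable {I : MGraph.{u}} {C : Type*} [Category C]

/-- A natural transformation between diagrams of shape `I`. -/
@[ext]
structure GHom (F G : GDiagram I C) where
  app : (i : I.V) → F.obj i ⟶ G.obj i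
  naturality : ∀ e : I.E, F.map e ≫ app (I.t e) = app (I.s e) ≫ G.map e

/-- A transformation is cartesian if all its naturality squares are pullbacks. -/
def GHom.Cartesian {F G : GDiagram I C} (τ : GHom F G) : Prop :=
  ∀ e : I.E, IsPullback (F.map e) (τ.app (I.s e)) (τ.app (I.t e)) (G.map e)

/-- An object of the category `C^I ⇓ D` of cartesian transformations into `D`. -/
structure CartObj (D : GDiagram I C) where
  diag : GDiagram I C
  hom : GHom diag D
  cart : hom.Cartesian

instance cartObjCategory (D : GDiagram I C) : Category (CartObj D) where
  Hom A B := { φ : GHom A.diag B.diag // ∀ i, φ.app i ≫ B.hom.app i = A.hom.app i }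
  id A := ⟨⟨fun _ => 𝟙 _, fun e => by simp⟩, fun i => by simp⟩
  comp {A B C'} φ ψ :=
    ⟨⟨fun i => φ.1.app i ≫ ψ.1.app i, fun e => by
        rw [← Category.assoc, φ.1.naturality, Category.assoc, ψ.1.naturality, ← Category.assoc]⟩,
      fun i => by rw [Category.assoc, ψ.2 i, φ.2 i]⟩
  id_comp f := Subtype.ext (GHom.ext (funext fun i => Category.id_comp _))
  comp_id f := Subtype.ext (GHom.ext (funext fun i => Category.comp_id _))
  assoc f g h := Subtype.ext (GHom.ext (funext fun i => Category.assoc _ _ _))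

/-- A commutative cocone under a diagram of shape `I`. -/
structure GCocone (D : GDiagram I C) where
  pt : C
  leg : (i : I.V) → D.obj i ⟶ pt
  comm : ∀ e : I.E, D.map e ≫ leg (I.t e) = leg (I.s e)

/-- A cocone is colimiting if every cocone factors uniquely through it. -/
def GCocone.IsColimit {D : GDiagram I C} (c : GCocone D) : Prop :=
  ∀ c' : GCocone D, ∃! f : c.pt ⟶ c'.pt, ∀ i, c.leg i ≫ f = c'.leg i

/-- The Van Kampen property of a cocone `c`: the functor `κ*`, given by pulling back
objects of the slice category over the apex along all the cocone legs, is an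
equivalence between the slice category and the category of cartesian natural
transformations into `D`.  (We phrase this as: there is an equivalence `F` which is,
objectwise and morphismwise, given by pullback along the legs.) -/
def GCocone.IsVanKampen {D : GDiagram I C} (c : GCocone D) : Prop :=
  ∃ (F : Over c.pt ⥤ CartObj D)
    (π : (σ : Over c.pt) → (i : I.V) → ((F.obj σ).diag.obj i ⟶ σ.left)),
    (∀ (σ : Over c.pt) (i : I.V),
        IsPullback (π σ i) ((F.obj σ).hom.app i) σ.hom (c.leg i)) ∧
    (∀ {σ σ' : Over c.pt} (γ : σ ⟶ σ') (i : I.V),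
        ((F.map γ).1.app i) ≫ π σ' i = π σ i ≫ γ.left) ∧
    F.IsEquivalence

end Core
section Paths

variable {B : Type u} [SmallCategory B] {I : MGraph.{u}}

/-- An element of some component of the diagram `D`, at sort `X`
(the components are regarded as disjoint, so each element is tagged with its index). -/
def Elt (D : GDiagram I (B ⥤ Type u)) (X : B) : Type u :=
  Σ i : I.V, (D.obj i).obj X

/-- A path segment of sort `X` in the diagram `D`: a triple `(y, δ, y')` with
`δ` an edge (`fwd`) or a formally reversed edge (`bwd`) of the shape graph. -/
inductive Seg (D : GDiagram I (B ⥤ Type u)) (X : B) : Type u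
  | fwd (d : I.E) (y : (D.obj (I.s d)).obj X)
  | bwd (d : I.E) (y : (D.obj (I.s d)).obj X)

namespace Seg

variable {D : GDiagram I (B ⥤ Type u)} {X : B}

/-- The first component of a path segment. -/
def src : Seg D X → Elt D X
  | fwd d y => ⟨I.s d, y⟩
  | bwd d y => ⟨I.t d, (D.map d).app X y⟩

/-- The third component of a path segment. -/
def tgt : Seg D X → Elt D X
  | fwd d y => ⟨I.t d, (D.map d).app X y⟩
  | bwd d y => ⟨I.s d, y⟩

/-- The reversed segment: `(y, δ, y') ↦ (y', δᵒᵖ, y)`. -/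
def rev : Seg D X → Seg D X
  | fwd d y => bwd d y
  | bwd d y => fwd d y

/-- Two segments are weakly equal if they are equal or each is the reverse of the other. -/
def WeaklyEq (a b : Seg D X) : Prop := a = b ∨ a = b.rev

end Seg

variable {D : GDiagram I (B ⥤ Type u)} {X : B}

/-- `p` is a mapping path of sort `X` connecting `z` with `z'`:  a finite sequence of
path segments in which consecutive segments share endpoints, starting at `z` and
ending at `z'`; the empty path connects each element with itself. -/
def IsMPath (p : List (Seg D X)) (z z' : Elt D X) : Prop :=
  p.Chain' (fun a b => a.tgt = b.src) ∧
  (p = [] → z = z') ∧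
  ∀ h : p ≠ [], (p.head h).src = z ∧ (p.getLast h).tgt = z'

/-- A mapping path is proper if no two distinct segments of it are weakly equal. -/
def ProperPath (p : List (Seg D X)) : Prop :=
  p.Pairwise (fun a b => ¬ Seg.WeaklyEq a b)

/-- Two mapping paths are disjoint if no segment of one is weakly equal to a segment
of the other. -/
def DisjointPaths (p q : List (Seg D X)) : Prop :=
  ∀ a ∈ p, ∀ b ∈ q, ¬ Seg.WeaklyEq a b

/-- A mapping path `p` starting at `z` is inner-cycle free if `yᵢ ≠ yⱼ` for all
`0 ≤ i < j ≤ n` with `j - i ≤ n - 1`, where `y₀ = z, y₁, …, yₙ` is the sequence of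
elements visited by the path. -/
def InnerCycleFree (p : List (Seg D X)) (z : Elt D X) : Prop :=
  ∀ (i j : ℕ), (_ : i < j) → (_ : j ≤ p.length) → j - i ≤ p.length - 1 →
    (z :: p.map Seg.tgt).get ⟨i, by simp only [List.length_cons, List.length_map]; omega⟩ ≠
    (z :: p.map Seg.tgt).get ⟨j, by simp only [List.length_cons, List.length_map]; omega⟩

end Paths
section GraphNotions

/-- The cyclic successor of `j : Fin n`. -/
def fcsucc {n : ℕ} (hn : 0 < n) (j : Fin n) : Fin n := ⟨(j.1 + 1) % n, Nat.mod_lt _ hn⟩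

/-- `IsEdgeSeq I l i j` : `l` is a sequence of edges of `I` leading from `i` to `j`. -/
def IsEdgeSeq (I : MGraph.{u}) : List I.E → I.V → I.V → Prop
  | [], i, j => i = j
  | e :: l, i, j => I.s e = i ∧ IsEdgeSeq I l (I.t e) j

/-- A vertex is minimal if it has no outgoing edges. -/
def MGraph.Minimal (I : MGraph.{u}) (i : I.V) : Prop := ∀ e : I.E, I.s e ≠ i

/-- A vertex is branching if it has at least two outgoing edges. -/
def MGraph.Branching (I : MGraph.{u}) (i : I.V) : Prop :=
  ∃ e e' : I.E, e ≠ e' ∧ I.s e = i ∧ I.s e' = i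

/-- A branch is a nonempty edge sequence from a branching vertex to a minimal vertex. -/
def IsBranch (I : MGraph.{u}) (p : List I.E) (i j : I.V) : Prop :=
  I.Branching i ∧ I.Minimal j ∧ p ≠ [] ∧ IsEdgeSeq I p i j

/-- A minimal vertex is affected if it is the target of some branch. -/
def MGraph.Affected (I : MGraph.{u}) (j : I.V) : Prop := ∃ p i, IsBranch I p i j

/-- A directed cycle: pairwise distinct edges `d₀, …, d_{n-1}` (`n ≥ 1`) with
`t(d_{k-1}) = s(d_{k mod n})`. -/
def MGraph.HasDirectedCycle (I : MGraph.{u}) : Prop :=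
  ∃ (n : ℕ) (hn : 1 ≤ n) (d : Fin n → I.E), Function.Injective d ∧
    ∀ k : Fin n, I.t (d k) = I.s (d (fcsucc (by omega) k))

/-- The set of endpoints of an edge. -/
def MGraph.ends (I : MGraph.{u}) (e : I.E) : Set I.V := {I.s e, I.t e}

/-- An undirected cycle: pairwise distinct edges `d₀, …, d_{n-1}` (`n ≥ 2`) such that
cyclically consecutive edges share an endpoint. -/
def IsUndirectedCycle (I : MGraph.{u}) {n : ℕ} (hn : 2 ≤ n) (d : Fin n → I.E) : Prop :=
  Function.Injective d ∧
    ∀ k : Fin n, (I.ends (d k) ∩ I.ends (d (fcsucc (by omega) k))).Nonempty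

variable {B : Type u} [SmallCategory B] {I : MGraph.{u}}

/-- `Evals D X l z w` : applying, at sort `X`, the composite of the maps `D_d` along
the edge sequence `l` to the element `z` yields the element `w`. -/
inductive Evals (D : GDiagram I (B ⥤ Type u)) (X : B) :
    List I.E → Elt D X → Elt D X → Prop
  | nil (z : Elt D X) : Evals D X [] z z
  | cons (e : I.E) (y : (D.obj (I.s e)).obj X) {l : List I.E} {w : Elt D X} :
      Evals D X l ⟨I.t e, (D.map e).app X y⟩ w → Evals D X (e :: l) ⟨I.s e, y⟩ w

/-- `D` is image-disjoint: for each pair of different branches `p, p'` starting at the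
same branching vertex `i` and every `y ∈ D_i(X)`, we have `D_p(y) ≠ D_{p'}(y)`. -/
def ImageDisjoint (D : GDiagram I (B ⥤ Type u)) : Prop :=
  ∀ (i j j' : I.V) (p p' : List I.E), IsBranch I p i j → IsBranch I p' i j' → p ≠ p' →
    ∀ (X : B) (y : (D.obj i).obj X) (w w' : Elt D X),
      Evals D X p ⟨i, y⟩ w → Evals D X p' ⟨i, y⟩ w' → w ≠ w'

end GraphNotions


/-!
Going once around the cycle is a self-map of the finite non-empty set `D_{i₀}(X)`, so some `y`
returns to itself after `k ≥ 1` rounds. The forward segments visited during one minimal period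
of the edge-by-edge walk are pairwise distinct, since the edges of the cycle are distinct; they
form a non-empty proper mapping path from `y` to `y`.

If the cocone were Van Kampen, the `ℤ`-fold cover of `D` whose edge maps raise the level by one
would be the pullback of some `σ` over the apex. Lifting an edge to a pullback of `σ` acts on
`σ.left(X)` through an endomorphism of `X` that does not depend on `σ` (it is computed in the
representable case), so lifting the loop `r` times from a point `α₀` over `y` with
`σ`-component `u` gives a point over `y` whose level is raised by `r` times the length of the loop
and whose `σ`-component is `Φ^r u`. The pullback property makes these components pairwise
distinct. But `Φ^r u` is also the `σ`-component of `Φ^r α₀`, which keeps the level of `α₀` and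
lies over the finite set `D_{i₀}(X)`, so there are only finitely many of them.
-/

open Function

theorem Set.MapsTo.exists_mem_periodicPts {α : Type*} {f : α → α} {s : Set α}
    (hf : Set.MapsTo f s s) (hs : s.Finite) (hne : s.Nonempty) : ∃ x ∈ s, x ∈ periodicPts f := by
  obtain ⟨x₀, hx₀⟩ := hne
  have := hs.to_subtype
  obtain ⟨a, b, hab, heq⟩ :=
    Finite.exists_ne_map_eq_of_infinite fun r : ℕ => (⟨f^[r] x₀, hf.iterate r hx₀⟩ : s)
  have key : ∀ a b, a < b → f^[a] x₀ = f^[b] x₀ → ∃ x ∈ s, x ∈ periodicPts f := by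
    intro a b hlt heq
    refine ⟨f^[a] x₀, hf.iterate a hx₀, mk_mem_periodicPts (Nat.sub_pos_of_lt hlt) ?_⟩
    rw [IsPeriodicPt, IsFixedPt, ← iterate_add_apply, Nat.sub_add_cancel hlt.le, heq]
  rcases hab.lt_or_gt with h | h
  · exact key a b h (congrArg Subtype.val heq)
  · exact key b a h (congrArg Subtype.val heq).symm

section OrbitPath

variable {B : Type u} [SmallCategory B] {I : MGraph.{u}} {D : GDiagram I (B ⥤ Type u)} {X : B}
  {α : Type*} (f : α → α) (σ : α → Seg D X)

noncomputable def orbitPath (x : α) : List (Seg D X) :=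
  (List.range (minimalPeriod f x)).map fun t => σ (f^[t] x)

variable {f σ} {x : α}

theorem orbitPath_ne_nil (hx : x ∈ periodicPts f) : orbitPath f σ x ≠ [] := by
  simpa [orbitPath] using (minimalPeriod_pos_of_mem_periodicPts hx).ne'

theorem isMPath_orbitPath (hσ : ∀ a, (σ a).tgt = (σ (f a)).src) (hx : x ∈ periodicPts f) :
    IsMPath (orbitPath f σ x) (σ x).src (σ x).src := by
  refine ⟨(List.isChain_map _).2 <| (List.isChain_range _ _).2 fun m _ => ?_, fun _ => rfl,
    fun hne => ⟨by simp [orbitPath], ?_⟩⟩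
  · rw [hσ, ← iterate_succ_apply' f]
  · unfold orbitPath at hne ⊢
    rw [List.getLast_map, List.getLast_range, hσ, ← iterate_succ_apply' f, Nat.succ_eq_add_one,
      Nat.sub_one_add_one (minimalPeriod_pos_of_mem_periodicPts hx).ne', iterate_minimalPeriod]

theorem properPath_orbitPath (hσ : Injective σ) (hfwd : ∀ a, ∃ e y, σ a = .fwd e y) :
    ProperPath (orbitPath f σ x) := by
  have hnodup : (orbitPath f σ x).Nodup :=
    (List.nodup_range).map_on fun a ha b hb h =>
      iterate_injOn_Iio_minimalPeriod (List.mem_range.1 ha) (List.mem_range.1 hb) (hσ h)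
  refine hnodup.imp_of_mem fun {s s'} hs hs' hne hweq => hweq.elim hne fun hrev => ?_
  obtain ⟨a, -, rfl⟩ := List.mem_map.1 hs
  obtain ⟨a', -, rfl⟩ := List.mem_map.1 hs'
  obtain ⟨e, y, he⟩ := hfwd (f^[a] x)
  obtain ⟨e', y', he'⟩ := hfwd (f^[a'] x)
  rw [he, he'] at hrev
  cases hrev

end OrbitPath

theorem Evals.append {B : Type u} [SmallCategory B] {I : MGraph.{u}}
    {D : GDiagram I (B ⥤ Type u)} {X : B} {l l' : List I.E} {z w v : Elt D X}
    (h : Evals D X l z w) (h' : Evals D X l' w v) :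
    Evals D X (l ++ l') z v := by
  induction h with
  | nil => exact h'
  | cons e y _ ih => exact .cons e y (ih h')

section CycleWalk

variable {B : Type u} [SmallCategory B] {I : MGraph.{u}} (D : GDiagram I (B ⥤ Type u)) (X : B)
  {n : ℕ} (hn : 0 < n) (d : Fin n → I.E)

theorem Elt.mk_eqToHom_app {i i' : I.V} (h : i = i') (x : (D.obj i).obj X) :
    (⟨i', (eqToHom (congrArg D.obj h)).app X x⟩ : Elt D X) = ⟨i, x⟩ := by
  subst h; rfl

abbrev CyclePt := Σ j : Fin n, (D.obj (I.s (d j))).obj X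

variable {D X d}

def CyclePt.seg (p : CyclePt D X d) : Seg D X := .fwd (d p.1) p.2

variable (hcyc : ∀ k : Fin n, I.t (d k) = I.s (d (fcsucc hn k)))

def cycleStep (p : CyclePt D X d) : CyclePt D X d :=
  ⟨fcsucc hn p.1, (D.map (d p.1) ≫ eqToHom (congrArg D.obj (hcyc p.1))).app X p.2⟩

theorem CyclePt.seg_tgt (p : CyclePt D X d) : p.seg.tgt = (cycleStep hn hcyc p).seg.src :=
  (Elt.mk_eqToHom_app D X (hcyc p.1) _).symm

theorem cycleStep_iterate_fst_val (m : ℕ) (p : CyclePt D X d) :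
    ((cycleStep hn hcyc)^[m] p).1.val = (p.1.val + m) % n := by
  induction m with
  | zero => exact (Nat.mod_eq_of_lt p.1.isLt).symm
  | succ m ih =>
    rw [iterate_succ_apply']
    show (_ + 1) % n = _
    rw [ih, Nat.mod_add_mod, Nat.add_assoc]

theorem cycleStep_iterate_period_fst (p : CyclePt D X d) :
    ((cycleStep hn hcyc)^[n] p).1 = p.1 :=
  Fin.ext <| by rw [cycleStep_iterate_fst_val, Nat.add_mod_right, Nat.mod_eq_of_lt p.1.isLt]

theorem evals_cons_cycleStep {l : List I.E} {w : Elt D X} (p : CyclePt D X d)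
    (h : Evals D X l (cycleStep hn hcyc p).seg.src w) : Evals D X (d p.1 :: l) p.seg.src w := by
  rw [← CyclePt.seg_tgt] at h
  exact .cons _ _ h

theorem evals_drop_ofFn (m : ℕ) (p : CyclePt D X d) (hp : p.1.val + (m + 1) = n) :
    Evals D X ((List.ofFn d).drop p.1) p.seg.src ((cycleStep hn hcyc)^[m + 1] p).seg.src := by
  have hdrop (j : Fin n) : (List.ofFn d).drop j = d j :: (List.ofFn d).drop (j + 1) := by
    rw [List.drop_eq_getElem_cons (by simp), List.getElem_ofFn]
  induction m generalizing p with
  | zero =>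
    rw [hdrop, List.drop_eq_nil_of_le (by simp; omega)]
    exact evals_cons_cycleStep hn hcyc p (.nil _)
  | succ m ih =>
    have hstep : ((cycleStep hn hcyc) p).1.val = p.1 + 1 := by
      rw [← iterate_one (cycleStep hn hcyc), cycleStep_iterate_fst_val]
      exact Nat.mod_eq_of_lt (by omega)
    rw [hdrop, ← hstep, iterate_succ_apply]
    exact evals_cons_cycleStep hn hcyc p (ih _ (by omega))

theorem evals_flatten_replicate_ofFn (k : ℕ) (p : CyclePt D X d) (hp : p.1.val = 0) :
    Evals D X (List.replicate k (List.ofFn d)).flatten p.seg.src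
      ((cycleStep hn hcyc)^[n * k] p).seg.src := by
  induction k generalizing p with
  | zero => exact .nil _
  | succ k ih =>
    have hround : Evals D X (List.ofFn d) p.seg.src ((cycleStep hn hcyc)^[n] p).seg.src := by
      obtain ⟨m, rfl⟩ := Nat.exists_eq_add_of_lt hn
      simpa [hp] using evals_drop_ofFn hn hcyc m p (by omega)
    rw [List.replicate_succ, List.flatten_cons, Nat.mul_succ, iterate_add_apply]
    exact hround.append (ih _ (by rw [cycleStep_iterate_period_fst hn hcyc, hp]))

theorem CyclePt.seg_injective (hinj : Injective d) :
    Injective (CyclePt.seg : CyclePt D X d → Seg D X) := by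
  rintro ⟨j, y⟩ ⟨j', y'⟩ h
  obtain ⟨hj, hy⟩ := Seg.fwd.inj h
  exact Sigma.ext (hinj hj) hy

variable (D X) in
theorem exists_isPeriodicPt_cycleStep (j : Fin n) [Finite ((D.obj (I.s (d j))).obj X)]
    [Nonempty ((D.obj (I.s (d j))).obj X)] :
    ∃ (y : (D.obj (I.s (d j))).obj X) (k : ℕ), 0 < k ∧
      IsPeriodicPt (cycleStep hn hcyc) (n * k) ⟨j, y⟩ := by
  have hmaps :
      Set.MapsTo (cycleStep (D := D) (X := X) hn hcyc)^[n] {p | p.1 = j} {p | p.1 = j} :=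
    fun p hp => (cycleStep_iterate_period_fst hn hcyc p).trans hp
  have hfin : {p : CyclePt D X d | p.1 = j}.Finite :=
    Set.finite_coe_iff.1 (Finite.of_equiv _ (Equiv.sigmaSubtype j).symm)
  obtain ⟨⟨j', y⟩, rfl, hper⟩ :=
    hmaps.exists_mem_periodicPts hfin ⟨⟨j, Classical.arbitrary _⟩, rfl⟩
  obtain ⟨k, hk, hper⟩ := mem_periodicPts.1 hper
  exact ⟨y, k, hk, by rwa [IsPeriodicPt, iterate_mul]⟩

end CycleWalk

section TwistedCover

variable {B : Type u} [SmallCategory B] {I : MGraph.{u}} (D : GDiagram I (B ⥤ Type u))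

def twistedObj (i : I.V) : B ⥤ Type u where
  obj Y := (D.obj i).obj Y × ULift.{u} ℤ
  map ψ := TypeCat.ofHom fun a => ((D.obj i).map ψ a.1, a.2)

def twistedMap (e : I.E) : twistedObj D (I.s e) ⟶ twistedObj D (I.t e) where
  app Y := TypeCat.ofHom fun a => ((D.map e).app Y a.1, ⟨a.2.down + 1⟩)
  naturality Y Y' ψ := by
    ext a
    exact Prod.ext (by exact NatTrans.naturality_apply (D.map e) ψ a.1) rfl

def twistedFst (i : I.V) : twistedObj D i ⟶ D.obj i where
  app Y := TypeCat.ofHom Prod.fst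

def twistedCover : CartObj D where
  diag := ⟨twistedObj D, twistedMap D⟩
  hom := ⟨twistedFst D, fun _ => rfl⟩
  cart e := IsPullback.of_forall_isPullback_app fun Y => by
    refine (Types.isPullback_iff _ _ _ _).2 ⟨rfl, fun a b ⟨h₁, h₂⟩ => ?_, fun a x h => ?_⟩
    · have h₃ : a.2.down + 1 = b.2.down + 1 := congrArg (fun p => p.2.down) h₁
      exact Prod.ext h₂ (ULift.ext _ _ (add_right_cancel h₃))
    · exact ⟨(x, ⟨a.2.down - 1⟩), Prod.ext h.symm (ULift.ext _ _ (Int.sub_add_cancel _ _)), rfl⟩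

variable {D} {A : CartObj D}

def twistedLevel (χ : A ⟶ twistedCover D) {i : I.V} {Y : B} (a : (A.diag.obj i).obj Y) : ℤ :=
  ((χ.1.app i).app Y a : (twistedObj D i).obj Y).2.down

theorem twistedLevel_diag_map (χ : A ⟶ twistedCover D) (e : I.E) {Y : B}
    (a : (A.diag.obj (I.s e)).obj Y) :
    twistedLevel χ ((A.diag.map e).app Y a) = twistedLevel χ a + 1 := by
  have h : (χ.1.app (I.t e)).app Y ((A.diag.map e).app Y a) =
      (twistedMap D e).app Y ((χ.1.app (I.s e)).app Y a) := by
    rw [← NatTrans.comp_app_apply, χ.1.naturality e]; rfl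
  exact congrArg (fun b : (twistedObj D (I.t e)).obj Y => b.2.down) h

theorem twistedLevel_obj_map (χ : A ⟶ twistedCover D) {i : I.V} {Y Y' : B} (ψ : Y ⟶ Y')
    (a : (A.diag.obj i).obj Y) : twistedLevel χ ((A.diag.obj i).map ψ a) = twistedLevel χ a := by
  unfold twistedLevel
  rw [NatTrans.naturality_apply]
  rfl

theorem twistedLevel_of_evals (χ : A ⟶ twistedCover D) {Y : B} {l : List I.E}
    {a b : Elt A.diag Y} (h : Evals A.diag Y l a b) :
    twistedLevel χ b.2 = twistedLevel χ a.2 + l.length := by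
  induction h with
  | nil => simp
  | cons e a _ ih => rw [ih, twistedLevel_diag_map, List.length_cons]; push_cast; ring

theorem CartObj.ext_of_iso_twistedCover (χ : A ≅ twistedCover D) {i : I.V} {Y : B}
    {a b : (A.diag.obj i).obj Y} (hhom : (A.hom.app i).app Y a = (A.hom.app i).app Y b)
    (hlevel : twistedLevel χ.hom a = twistedLevel χ.hom b) : a = b := by
  have hfst (a : (A.diag.obj i).obj Y) :
      ((χ.hom.1.app i).app Y a : (twistedObj D i).obj Y).1 = (A.hom.app i).app Y a :=
    congrArg (fun m : A.diag.obj i ⟶ D.obj i => m.app Y a) (χ.hom.2 i)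
  have hinv (a : (A.diag.obj i).obj Y) : (χ.inv.1.app i).app Y ((χ.hom.1.app i).app Y a) = a :=
    congrArg (fun m : A ⟶ A => (m.1.app i).app Y a) χ.hom_inv_id
  rw [← hinv a, ← hinv b]
  congr 1
  exact Prod.ext ((hfst a).trans (hhom.trans (hfst b).symm)) (ULift.ext _ _ hlevel)

theorem CartObj.finite_setOf_twistedLevel_eq (χ : A ≅ twistedCover D) {i : I.V} {Y : B}
    [Finite ((D.obj i).obj Y)] (k : ℤ) :
    {a : (A.diag.obj i).obj Y | twistedLevel χ.hom a = k}.Finite :=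
  Set.Finite.of_injOn (Set.mapsTo_univ ((A.hom.app i).app Y) _)
    (fun _ ha _ hb h => ext_of_iso_twistedCover χ h (ha.trans hb.symm)) Set.finite_univ

end TwistedCover

section VanKampen

variable {B : Type u} [SmallCategory B] {I : MGraph.{u}} {D : GDiagram I (B ⥤ Type u)}
  {c : GCocone D} {F : Over c.pt ⥤ CartObj D}
  {π : (σ : Over c.pt) → (i : I.V) → ((F.obj σ).diag.obj i ⟶ σ.left)}

/-- `φ` is read off from the universal case `σ = (coyoneda X → c.pt)`, which maps to every
other `σ` through a point of `σ.left(X)`. -/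
theorem exists_edge_transport
    (hpb : ∀ σ i, IsPullback (π σ i) ((F.obj σ).hom.app i) σ.hom (c.leg i))
    (hnat : ∀ {σ σ' : Over c.pt} (γ : σ ⟶ σ') (i : I.V),
      (F.map γ).1.app i ≫ π σ' i = π σ i ≫ γ.left)
    (e : I.E) {X : B} (x : (D.obj (I.s e)).obj X) :
    ∃ φ : X ⟶ X, ∀ (σ : Over c.pt) (α : ((F.obj σ).diag.obj (I.s e)).obj X),
      ((F.obj σ).hom.app (I.s e)).app X α = x →
      (π σ (I.t e)).app X (((F.obj σ).diag.map e).app X α) =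
        σ.left.map φ ((π σ (I.s e)).app X α) := by
  let ρ : Over c.pt := Over.mk (coyonedaEquiv.symm ((c.leg (I.s e)).app X x))
  obtain ⟨a₀, ha₀π, ha₀⟩ := Types.exists_of_isPullback ((hpb ρ (I.s e)).app X) (𝟙 X) x
    (by simp [ρ, coyonedaEquiv_symm_app_apply])
  refine ⟨(π ρ (I.t e)).app X (((F.obj ρ).diag.map e).app X a₀), fun σ α hα => ?_⟩
  set u := (π σ (I.s e)).app X α
  have hu : σ.hom.app X u = (c.leg (I.s e)).app X x := by
    rw [← hα, ← NatTrans.comp_app_apply, (hpb σ (I.s e)).w, NatTrans.comp_app_apply]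
  let γ : ρ ⟶ σ := Over.homMk (coyonedaEquiv.symm u)
    (coyonedaEquiv.injective (by simp [ρ, coyonedaEquiv_comp, hu]))
  have hγa₀ : ((F.map γ).1.app (I.s e)).app X a₀ = α := by
    refine Types.ext_of_isPullback ((hpb σ (I.s e)).app X) ?_ ?_
    · rw [← NatTrans.comp_app_apply, hnat γ, NatTrans.comp_app_apply, ha₀π]
      exact (coyonedaEquiv_symm_app_apply _ _ _).trans (Functor.map_id_apply _ _ _)
    · rw [← NatTrans.comp_app_apply, (F.map γ).2, ha₀, hα]
  calc (π σ (I.t e)).app X (((F.obj σ).diag.map e).app X α)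
      = (π σ (I.t e)).app X
          (((F.map γ).1.app (I.t e)).app X (((F.obj ρ).diag.map e).app X a₀)) := by
        rw [← NatTrans.comp_app_apply ((F.obj ρ).diag.map e), (F.map γ).1.naturality,
          NatTrans.comp_app_apply, hγa₀]
    _ = σ.left.map _ u := by
        rw [← NatTrans.comp_app_apply, hnat γ, NatTrans.comp_app_apply]
        exact coyonedaEquiv_symm_app_apply _ _ _

theorem exists_path_transport
    (hpb : ∀ σ i, IsPullback (π σ i) ((F.obj σ).hom.app i) σ.hom (c.leg i))
    (hnat : ∀ {σ σ' : Over c.pt} (γ : σ ⟶ σ') (i : I.V),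
      (F.map γ).1.app i ≫ π σ' i = π σ i ≫ γ.left)
    {X : B} {l : List I.E} {z w : Elt D X} (h : Evals D X l z w) :
    ∃ Φ : X ⟶ X, ∀ (σ : Over c.pt) (α : ((F.obj σ).diag.obj z.1).obj X),
      ((F.obj σ).hom.app z.1).app X α = z.2 →
      ∃ β : ((F.obj σ).diag.obj w.1).obj X, ((F.obj σ).hom.app w.1).app X β = w.2 ∧
        Evals (F.obj σ).diag X l ⟨z.1, α⟩ ⟨w.1, β⟩ ∧
        (π σ w.1).app X β = σ.left.map Φ ((π σ z.1).app X α) := by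
  induction h with
  | nil z => exact ⟨𝟙 X, fun σ α hα => ⟨α, hα, .nil _, by simp⟩⟩
  | cons e y _ ih =>
    obtain ⟨φ, hφ⟩ := exists_edge_transport hpb hnat e y
    obtain ⟨Φ, hΦ⟩ := ih
    refine ⟨φ ≫ Φ, fun σ α hα => ?_⟩
    have hα' : ((F.obj σ).hom.app (I.t e)).app X (((F.obj σ).diag.map e).app X α) =
        (D.map e).app X y := by
      rw [← NatTrans.comp_app_apply, (F.obj σ).hom.naturality, NatTrans.comp_app_apply, hα]
    obtain ⟨β, hβ, hev, hβπ⟩ := hΦ σ _ hα'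
    exact ⟨β, hβ, .cons e α hev, by rw [hβπ, hφ σ α hα, Functor.map_comp_apply]⟩

theorem GCocone.not_isVanKampen_of_loop (c : GCocone D) {X : B} {l : List I.E} {i : I.V}
    {y : (D.obj i).obj X} (hl : l ≠ []) (hloop : Evals D X l ⟨i, y⟩ ⟨i, y⟩)
    [Finite ((D.obj i).obj X)] : ¬ c.IsVanKampen := by
  rintro ⟨F, π, hpb, hnat, hF⟩
  obtain ⟨Φ, hΦ⟩ := exists_path_transport hpb hnat hloop
  set σ := F.objPreimage (twistedCover D)
  set χ : F.obj σ ≅ twistedCover D := F.objObjPreimageIso _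
  set S := σ.left.map Φ
  set α₀ := (χ.inv.1.app i).app X (y, ⟨0⟩)
  have hα₀ : ((F.obj σ).hom.app i).app X α₀ = y :=
    congrArg (fun m : _ ⟶ D.obj i => m.app X (y, ⟨0⟩)) (χ.inv.2 i)
  have hlift (r : ℕ) : ∃ α, ((F.obj σ).hom.app i).app X α = y ∧
      twistedLevel χ.hom α = twistedLevel χ.hom α₀ + r * l.length ∧
      (π σ i).app X α = S^[r] ((π σ i).app X α₀) := by
    induction r with
    | zero => exact ⟨α₀, hα₀, by simp, rfl⟩
    | succ r ih =>
      obtain ⟨α, hα, hlev, hπ⟩ := ih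
      obtain ⟨β, hβ, hev, hβπ⟩ := hΦ σ α hα
      refine ⟨β, hβ, ?_, by rw [hβπ, hπ, iterate_succ_apply']⟩
      rw [twistedLevel_of_evals χ.hom hev, hlev]; push_cast; ring
  have hinj : Injective fun r : ℕ => S^[r] ((π σ i).app X α₀) := by
    intro r r' h
    obtain ⟨α, hα, hlev, hπ⟩ := hlift r
    obtain ⟨α', hα', hlev', hπ'⟩ := hlift r'
    have := Types.ext_of_isPullback ((hpb σ i).app X) (hπ.trans (h.trans hπ'.symm))
      (hα.trans hα'.symm)
    rw [this, hlev'] at hlev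
    have hlen : (l.length : ℤ) ≠ 0 := by exact_mod_cast (List.length_pos_iff.2 hl).ne'
    exact_mod_cast (mul_right_cancel₀ hlen (add_left_cancel hlev)).symm
  have hfinite : (Set.range fun r : ℕ => S^[r] ((π σ i).app X α₀)).Finite := by
    refine ((CartObj.finite_setOf_twistedLevel_eq χ (twistedLevel χ.hom α₀)).image
      ((π σ i).app X)).subset ?_
    rintro _ ⟨r, rfl⟩
    refine ⟨(((F.obj σ).diag.obj i).map Φ)^[r] α₀, ?_, ?_⟩
    · show twistedLevel χ.hom _ = _
      induction r with
      | zero => rfl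
      | succ r ih => rw [iterate_succ_apply', twistedLevel_obj_map, ih]
    · exact (Semiconj.iterate_right (fun a => NatTrans.naturality_apply (π σ i) Φ a) r) α₀
  exact Set.infinite_range_of_injective hinj hfinite

end VanKampen

/-- **Directed cycles with a finite component violate VK** (Sect. 6.2).  If `I`
contains a directed cycle `p = (i₀ →^{d₀} i₁ → … → iₙ = i₀)` and for some sort `X`
the set `D_{i₀}(X)` is finite and non-empty, then the colimiting cocone `κ` is not
Van Kampen: there are `y ∈ D_{i₀}(X)` and `k ≥ 1` with `D_p^k(y) = y`, giving a
non-empty proper mapping path of sort `X` connecting `y` with itself, which together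
with the empty path gives two different proper mapping paths from `y` to `y`. -/
theorem directedCycle_not_vanKampen
    {B : Type u} [SmallCategory B] {I : MGraph.{u}}
    (D : GDiagram I (B ⥤ Type u)) (c : GCocone D)
    (n : ℕ) (hn : 1 ≤ n) (d : Fin n → I.E) (hinj : Function.Injective d)
    (hcyc : ∀ k : Fin n, I.t (d k) = I.s (d (fcsucc (by omega) k)))
    (X : B)
    (hfin : Finite ((D.obj (I.s (d ⟨0, by omega⟩))).obj X))
    (hne : Nonempty ((D.obj (I.s (d ⟨0, by omega⟩))).obj X)) :
    ¬ c.IsVanKampen ∧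
      ∃ (y : (D.obj (I.s (d ⟨0, by omega⟩))).obj X) (k : ℕ), 1 ≤ k ∧
        Evals D X ((List.replicate k (List.ofFn d)).flatten)
          ⟨I.s (d ⟨0, by omega⟩), y⟩ ⟨I.s (d ⟨0, by omega⟩), y⟩ ∧
        ∃ P : List (Seg D X), P ≠ [] ∧
          IsMPath P ⟨I.s (d ⟨0, by omega⟩), y⟩ ⟨I.s (d ⟨0, by omega⟩), y⟩ ∧
          ProperPath P := by
  obtain ⟨y, k, hk, hper⟩ := exists_isPeriodicPt_cycleStep D X hn hcyc ⟨0, hn⟩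
  have hloop := evals_flatten_replicate_ofFn hn hcyc k ⟨⟨0, hn⟩, y⟩ rfl
  rw [hper.eq] at hloop
  have hper' : (⟨⟨0, hn⟩, y⟩ : CyclePt D X d) ∈ periodicPts (cycleStep hn hcyc) :=
    mk_mem_periodicPts (Nat.mul_pos hn hk) hper
  have hloop_ne_nil : (List.replicate k (List.ofFn d)).flatten ≠ [] := by
    simpa [List.flatten_eq_nil_iff, List.ofFn_eq_nil_iff] using ⟨hk.ne', by omega⟩
  exact ⟨c.not_isVanKampen_of_loop hloop_ne_nil hloop, y, k, hk, hloop,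
    orbitPath (cycleStep hn hcyc) CyclePt.seg _, orbitPath_ne_nil hper',
    isMPath_orbitPath (CyclePt.seg_tgt hn hcyc) hper',
    properPath_orbitPath (CyclePt.seg_injective hinj) fun _ => ⟨_, _, rfl⟩⟩
end

section
/- Let B be a small category, G = Set^B, I a finite directed multigraph without directed cycles, and D : I → G a diagram. Let ≅ be the smallest congruence on ∐_{i∈Min(I)} D_i containing all primary identifications (⊆_j(D_p(y)), ⊆_{j'}(D_{p'}(y))) for pairs of branches p = (i →^d … → j), p' = (i →^{d'} … → j') with common source i ∈ Br(I) and d ≠ d', and elements y ∈ D_i(X), X ∈ B. Then the family κ with κ_i = [−]_≅ ∘ ⊆_i for i ∈ Min(I) and κ_i = κ_j ∘ D_p for i ∉ Min(I), where p = (i → … → j) is any edge sequence from i to some j ∈ Min(I), is well-defined (independent of the choice of p) and is a colimiting cocone D ⇒ Δ((∐_{i∈Min(I)} D_i)/≅). -/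
/-!
Evaluating `y ∈ D_i(X)` along two edge sequences that end in minimal vertices, the two
sequences agree until they first split at a branching vertex, where the two results form a
primary identification; so all such evaluations become equal modulo `≅` and `κ_i` is well
defined.  Since `I` is finite without directed cycles, the successor relation is well
founded and every vertex reaches a minimal one.  A cocone `c` is constant along evaluations,
so the copairing of its legs identifies primary pairs and hence, `≅` being the least such
congruence, factors through the quotient; uniqueness holds because maps out of the quotient
of a coproduct are determined on the coprojections.
-/

open CategoryTheory CategoryTheory.Limits

universe u

section SpecializedColimit

variable {B : Type u} [SmallCategory B] {I : MGraph.{u}}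

/-- The coproduct `∐_{i ∈ Min(I)} D_i` of the minimal components of `D`. -/
def minCoprod (D : GDiagram I (B ⥤ Type u)) : B ⥤ Type u where
  obj X := Σ i : { i : I.V // I.Minimal i }, (D.obj i.1).obj X
  map f := TypeCat.ofHom fun z => ⟨z.1, (D.obj z.1.1).map f z.2⟩
  map_id X := by
    refine ConcreteCategory.hom_ext _ _ fun z => ?_; simp [FunctorToTypes.map_id_apply]
  map_comp f g := by
    refine ConcreteCategory.hom_ext _ _ fun z => ?_; simp [FunctorToTypes.map_comp_apply]

/-- A congruence on a presheaf `F`: a family of equivalence relations, one for each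
sort, compatible with the action of the morphisms of `B`. -/
structure Congruence (F : B ⥤ Type u) where
  rel : (X : B) → F.obj X → F.obj X → Prop
  iseqv : ∀ X, Equivalence (rel X)
  compat : ∀ {X Y : B} (f : X ⟶ Y) (a b : F.obj X), rel X a b → rel Y (F.map f a) (F.map f b)

/-- The sortwise quotient presheaf of a congruence. -/
def Congruence.quotient {F : B ⥤ Type u} (R : Congruence F) : B ⥤ Type u where
  obj X := Quot (R.rel X)
  map f := TypeCat.ofHom (Quot.map (F.map f) (fun a b h => R.compat f a b h))
  map_id X := by
    ext z
    induction z using Quot.ind with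
    | _ a => simp [Quot.map, FunctorToTypes.map_id_apply]
  map_comp f g := by
    ext z
    induction z using Quot.ind with
    | _ a => simp [Quot.map, FunctorToTypes.map_comp_apply]

/-- The primary identifications at sort `X`: for each pair of branches
`p = (i →^{e} ⋯ → j)`, `p' = (i →^{e'} ⋯ → j')` with common source `i` and `e ≠ e'`,
and each `y ∈ D_i(X)`, the pair `(⊆_j(D_p(y)), ⊆_{j'}(D_{p'}(y)))`. -/
def PrimaryRel (D : GDiagram I (B ⥤ Type u)) (X : B)
    (a b : (minCoprod D).obj X) : Prop :=
  ∃ (i j j' : I.V) (hj : I.Minimal j) (hj' : I.Minimal j')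
    (e e' : I.E) (l l' : List I.E),
    e ≠ e' ∧ IsBranch I (e :: l) i j ∧ IsBranch I (e' :: l') i j' ∧
    ∃ (y : (D.obj i).obj X) (z : (D.obj j).obj X) (z' : (D.obj j').obj X),
      Evals D X (e :: l) ⟨i, y⟩ ⟨j, z⟩ ∧ Evals D X (e' :: l') ⟨i, y⟩ ⟨j', z'⟩ ∧
      a = ⟨⟨j, hj⟩, z⟩ ∧ b = ⟨⟨j', hj'⟩, z'⟩

end SpecializedColimit

theorem List.exists_eq_append_cons_append_cons_of_not_nodup {α : Type*} {l : List α}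
    (h : ¬ l.Nodup) : ∃ l₁ a l₂ l₃, l = l₁ ++ a :: (l₂ ++ a :: l₃) := by
  obtain ⟨a, ha⟩ := not_forall_not.mp (mt List.nodup_iff_sublist.mpr h)
  obtain ⟨r₁, r₂, rfl, ha₁, ha₂⟩ := List.cons_sublist_iff.mp ha
  obtain ⟨l₁, l₂, rfl⟩ := List.append_of_mem ha₁
  obtain ⟨l₂', l₃, rfl⟩ := List.append_of_mem (List.singleton_sublist.mp ha₂)
  exact ⟨l₁, a, l₂ ++ l₂', l₃, by simp⟩

section Acyclic

variable {I : MGraph.{u}}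

theorem isEdgeSeq_append {l₁ l₂ : List I.E} {i j : I.V} :
    IsEdgeSeq I (l₁ ++ l₂) i j ↔ ∃ m, IsEdgeSeq I l₁ i m ∧ IsEdgeSeq I l₂ m j := by
  induction l₁ generalizing i with
  | nil => simp [IsEdgeSeq]
  | cons e l ih => simp only [List.cons_append, IsEdgeSeq, ih, and_assoc, exists_and_left]

theorem IsEdgeSeq.t_getElem {l : List I.E} {i j : I.V} (h : IsEdgeSeq I l i j) (k : ℕ)
    (hk : k < l.length) : I.t l[k] = (l[k + 1]?.map I.s).getD j := by
  induction l generalizing i k with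
  | nil => simp at hk
  | cons e l ih =>
    cases k with
    | zero =>
      cases l with
      | nil => exact h.2
      | cons e' l => exact h.2.1.symm
    | succ k => exact ih h.2 k (by simpa using hk)

theorem IsEdgeSeq.hasDirectedCycle_of_nodup {l : List I.E} {i : I.V} (h : IsEdgeSeq I l i i)
    (hne : l ≠ []) (hnd : l.Nodup) : I.HasDirectedCycle := by
  refine ⟨l.length, List.length_pos_iff.mpr hne, l.get, List.nodup_iff_injective_get.mp hnd,
    fun k => ?_⟩
  simp only [List.get_eq_getElem, h.t_getElem k k.2, fcsucc]
  rcases Nat.lt_or_ge (k + 1) l.length with hk | hk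
  · simp [Nat.mod_eq_of_lt hk, List.getElem?_eq_getElem hk]
  · obtain ⟨e, l, rfl⟩ := List.exists_cons_of_ne_nil hne
    have hk : k.1 + 1 = (e :: l).length := by omega
    simp [hk, h.1]

theorem IsEdgeSeq.hasDirectedCycle {l : List I.E} {i : I.V} (h : IsEdgeSeq I l i i)
    (hne : l ≠ []) : I.HasDirectedCycle := by
  induction hn : l.length using Nat.strong_induction_on generalizing l i with
  | _ n ih =>
  by_cases hnd : l.Nodup
  · exact h.hasDirectedCycle_of_nodup hne hnd
  -- an edge `e` occurring twice cuts a shorter closed walk `e :: l₂` out of `l`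
  obtain ⟨l₁, e, l₂, l₃, rfl⟩ := List.exists_eq_append_cons_append_cons_of_not_nodup hnd
  obtain ⟨_, -, -, h₂₃⟩ := isEdgeSeq_append.mp h
  obtain ⟨_, h₂, hm', -⟩ := isEdgeSeq_append.mp h₂₃
  have hcyc : IsEdgeSeq I (e :: l₂) (I.s e) (I.s e) := ⟨rfl, hm' ▸ h₂⟩
  exact ih _ (by simp [← hn]; omega) hcyc (List.cons_ne_nil _ _) rfl

def MGraph.IsSucc (I : MGraph.{u}) (j i : I.V) : Prop := ∃ e : I.E, I.s e = i ∧ I.t e = j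

theorem MGraph.exists_isEdgeSeq_of_transGen {i j : I.V} (h : Relation.TransGen I.IsSucc j i) :
    ∃ l, l ≠ [] ∧ IsEdgeSeq I l i j := by
  induction h with
  | single h =>
    obtain ⟨e, hs, rfl⟩ := h
    exact ⟨[e], List.cons_ne_nil _ _, hs, rfl⟩
  | tail _ h ih =>
    obtain ⟨e, hs, rfl⟩ := h
    obtain ⟨l, -, hl⟩ := ih
    exact ⟨e :: l, List.cons_ne_nil _ _, hs, hl⟩

theorem MGraph.wellFounded_isSucc [Finite I.V] (hnc : ¬ I.HasDirectedCycle) :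
    WellFounded I.IsSucc := by
  have : Std.Irrefl (Relation.TransGen I.IsSucc) := ⟨fun i h => by
    obtain ⟨l, hne, hl⟩ := I.exists_isEdgeSeq_of_transGen h
    exact hnc (hl.hasDirectedCycle hne)⟩
  exact Subrelation.wf Relation.TransGen.single (Finite.wellFounded_of_trans_of_irrefl _)

theorem MGraph.exists_isEdgeSeq_minimal [Finite I.V] (hnc : ¬ I.HasDirectedCycle) (i : I.V) :
    ∃ j, I.Minimal j ∧ ∃ p, IsEdgeSeq I p i j := by
  induction i using (I.wellFounded_isSucc hnc).induction with
  | _ i ih =>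
  by_cases hi : I.Minimal i
  · exact ⟨i, hi, [], rfl⟩
  obtain ⟨e, he⟩ := not_forall_not.mp hi
  obtain ⟨j, hj, p, hp⟩ := ih (I.t e) ⟨e, he, rfl⟩
  exact ⟨j, hj, e :: p, he, hp⟩

end Acyclic

section PathMaps

variable {I : MGraph.{u}} {C : Type*} [Category C]

/-- The composite `D_p` of the maps of `D` along an edge sequence `p`. -/
def GDiagram.pathMap (D : GDiagram I C) :
    (p : List I.E) → {i j : I.V} → IsEdgeSeq I p i j → (D.obj i ⟶ D.obj j)
  | [], _, _, h => eqToHom (congrArg D.obj h)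
  | e :: p, _, _, h => eqToHom (congrArg D.obj h.1.symm) ≫ D.map e ≫ D.pathMap p h.2

theorem GCocone.pathMap_comp_leg {D : GDiagram I C} (c : GCocone D) :
    ∀ (p : List I.E) {i j : I.V} (h : IsEdgeSeq I p i j), D.pathMap p h ≫ c.leg j = c.leg i
  | [], _, _, h => by cases h; simp [GDiagram.pathMap]
  | e :: p, _, _, h => by
    obtain ⟨rfl, h⟩ := h
    simp [GDiagram.pathMap, c.pathMap_comp_leg p h, c.comm]

end PathMaps

section Evals

variable {B : Type u} [SmallCategory B] {I : MGraph.{u}} {D : GDiagram I (B ⥤ Type u)} {X : B}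

theorem Evals.isEdgeSeq {p : List I.E} {z w : Elt D X} (h : Evals D X p z w) :
    IsEdgeSeq I p z.1 w.1 := by
  induction h with
  | nil => rfl
  | cons e y _ ih => exact ⟨rfl, ih⟩

theorem Evals.of_cons {e : I.E} {p : List I.E} {y : (D.obj (I.s e)).obj X} {w : Elt D X}
    (h : Evals D X (e :: p) ⟨I.s e, y⟩ w) : Evals D X p ⟨I.t e, (D.map e).app X y⟩ w := by
  generalize hz : (⟨I.s e, y⟩ : Elt D X) = z at h
  cases h with
  | cons e y' h => cases hz; exact h

theorem evals_pathMap {p : List I.E} {i j : I.V} (h : IsEdgeSeq I p i j) (y : (D.obj i).obj X) :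
    Evals D X p ⟨i, y⟩ ⟨j, (D.pathMap p h).app X y⟩ := by
  induction p generalizing i with
  | nil => cases h; simpa [GDiagram.pathMap] using Evals.nil _
  | cons e p ih =>
    obtain ⟨rfl, h⟩ := h
    simpa [GDiagram.pathMap] using Evals.cons e y (ih h _)

theorem Evals.reflGen_primaryRel {p p' : List I.E} {z w w' : Elt D X} (h : Evals D X p z w)
    (h' : Evals D X p' z w') (hw : I.Minimal w.1) (hw' : I.Minimal w'.1) :
    Relation.ReflGen (PrimaryRel D X) ⟨⟨w.1, hw⟩, w.2⟩ ⟨⟨w'.1, hw'⟩, w'.2⟩ := by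
  induction h generalizing p' with
  | nil z =>
    cases h' with
    | nil => exact .refl
    | cons e' _ _ => exact absurd rfl (hw e')
  | cons e y h ih =>
    cases p' with
    | nil => cases h'; exact absurd rfl (hw' e)
    | cons e' l' =>
      by_cases hee : e = e'
      · subst hee
        exact ih h'.of_cons hw
      · have hseq := (Evals.cons e y h).isEdgeSeq
        have hseq' := h'.isEdgeSeq
        have hbr : I.Branching (I.s e) := ⟨e, e', hee, rfl, hseq'.1⟩
        exact .single ⟨I.s e, _, _, hw, hw', e, e', _, l', hee,
          ⟨hbr, hw, List.cons_ne_nil _ _, hseq⟩, ⟨hbr, hw', List.cons_ne_nil _ _, hseq'⟩,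
          y, _, _, .cons e y h, h', rfl, rfl⟩

theorem GCocone.leg_app_eq_of_evals (c : GCocone D) {p : List I.E} {z w : Elt D X}
    (h : Evals D X p z w) : (c.leg w.1).app X w.2 = (c.leg z.1).app X z.2 := by
  induction h with
  | nil => rfl
  | cons e y _ ih => rw [ih, ← c.comm e, NatTrans.comp_app_apply]

end Evals

section MinCoprod

variable {B : Type u} [SmallCategory B] {I : MGraph.{u}} (D : GDiagram I (B ⥤ Type u))

def minCoprodι {j : I.V} (hj : I.Minimal j) : D.obj j ⟶ minCoprod D where
  app X := TypeCat.ofHom fun z => ⟨⟨j, hj⟩, z⟩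

def minCoprodDesc {P : B ⥤ Type u} (φ : (i : I.V) → D.obj i ⟶ P) : minCoprod D ⟶ P where
  app X := TypeCat.ofHom fun a => (φ a.1.1).app X a.2
  naturality X Y f := by
    ext a
    exact NatTrans.naturality_apply (φ a.1.1) f a.2

variable {D}

@[simp]
theorem minCoprodι_desc {P : B ⥤ Type u} (φ : (i : I.V) → D.obj i ⟶ P) {j : I.V}
    (hj : I.Minimal j) : minCoprodι D hj ≫ minCoprodDesc D φ = φ j :=
  rfl

theorem minCoprod_hom_ext {P : B ⥤ Type u} {f g : minCoprod D ⟶ P}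
    (h : ∀ (j : I.V) (hj : I.Minimal j), minCoprodι D hj ≫ f = minCoprodι D hj ≫ g) :
    f = g := by
  ext X ⟨⟨j, hj⟩, z⟩
  exact ConcreteCategory.congr_hom (NatTrans.congr_app (h j hj) X) z

theorem GCocone.desc_app_eq_of_primaryRel (c : GCocone D) {X : B} {a b : (minCoprod D).obj X}
    (h : PrimaryRel D X a b) :
    (minCoprodDesc D c.leg).app X a = (minCoprodDesc D c.leg).app X b := by
  obtain ⟨_, _, _, _, _, _, _, _, _, _, -, -, _, _, _, hz, hz', rfl, rfl⟩ := h
  exact (c.leg_app_eq_of_evals hz).trans (c.leg_app_eq_of_evals hz').symm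

end MinCoprod

namespace Congruence

variable {B : Type u} [SmallCategory B]

section Quotient

variable {F G : B ⥤ Type u} (R : Congruence F)

def π : F ⟶ R.quotient where
  app X := TypeCat.ofHom (Quot.mk (R.rel X))

def ker (φ : F ⟶ G) : Congruence F where
  rel X a b := φ.app X a = φ.app X b
  iseqv _ := ⟨fun _ => rfl, Eq.symm, Eq.trans⟩
  compat f a b h := by simp only [NatTrans.naturality_apply, h]

def lift (φ : F ⟶ G) (h : ∀ X a b, R.rel X a b → φ.app X a = φ.app X b) :
    R.quotient ⟶ G where
  app X := TypeCat.ofHom (Quot.lift (φ.app X) (h X))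
  naturality X Y f := by
    ext q
    induction q using Quot.ind with
    | _ a => exact NatTrans.naturality_apply φ f a

variable {R}

@[simp]
theorem π_lift (φ : F ⟶ G) (h : ∀ X a b, R.rel X a b → φ.app X a = φ.app X b) :
    R.π ≫ R.lift φ h = φ :=
  rfl

theorem hom_ext {f g : R.quotient ⟶ G} (h : R.π ≫ f = R.π ≫ g) : f = g := by
  ext X q
  induction q using Quot.ind with
  | _ a => exact ConcreteCategory.congr_hom (NatTrans.congr_app h X) a

end Quotient

theorem mk_eq_mk_of_evals {I : MGraph.{u}} {D : GDiagram I (B ⥤ Type u)}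
    {R : Congruence (minCoprod D)} (hR : ∀ X a b, PrimaryRel D X a b → R.rel X a b)
    {X : B} {p p' : List I.E} {i j j' : I.V} (hj : I.Minimal j) (hj' : I.Minimal j')
    {y : (D.obj i).obj X} {z : (D.obj j).obj X} {z' : (D.obj j').obj X}
    (h : Evals D X p ⟨i, y⟩ ⟨j, z⟩) (h' : Evals D X p' ⟨i, y⟩ ⟨j', z'⟩) :
    Quot.mk (R.rel X) ⟨⟨j, hj⟩, z⟩ = Quot.mk (R.rel X) ⟨⟨j', hj'⟩, z'⟩ := by
  rcases h.reflGen_primaryRel h' hj hj' with _ | hprim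
  · rfl
  · exact Quot.sound (hR X _ _ hprim)

end Congruence

theorem specialized_colimit_construction_general
    {B : Type u} [SmallCategory B] {I : MGraph.{u}} [Finite I.V]
    (hnc : ¬ I.HasDirectedCycle)
    (D : GDiagram I (B ⥤ Type u))
    (R : Congruence (minCoprod D))
    (hR : ∀ X a b, PrimaryRel D X a b → R.rel X a b)
    (hRsmall : ∀ R' : Congruence (minCoprod D),
      (∀ X a b, PrimaryRel D X a b → R'.rel X a b) →
      ∀ X a b, R.rel X a b → R'.rel X a b) :
    ∃ (leg : (i : I.V) → (D.obj i ⟶ R.quotient))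
      (hcomm : ∀ e : I.E, D.map e ≫ leg (I.t e) = leg (I.s e)),
      (∀ (i : I.V) (hi : I.Minimal i) (X : B) (y : (D.obj i).obj X),
          (leg i).app X y = Quot.mk (R.rel X) ⟨⟨i, hi⟩, y⟩) ∧
      (∀ (i j : I.V) (hj : I.Minimal j) (p : List I.E), IsEdgeSeq I p i j →
          ∀ (X : B) (y : (D.obj i).obj X) (z : (D.obj j).obj X),
            Evals D X p ⟨i, y⟩ ⟨j, z⟩ →
            (leg i).app X y = Quot.mk (R.rel X) ⟨⟨j, hj⟩, z⟩) ∧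
      GCocone.IsColimit { pt := R.quotient, leg := leg, comm := hcomm } := by
  choose jmin hjmin p hp using I.exists_isEdgeSeq_minimal hnc
  let leg (i : I.V) : D.obj i ⟶ R.quotient :=
    D.pathMap (p i) (hp i) ≫ minCoprodι D (hjmin i) ≫ R.π
  have leg_app (i j : I.V) (hj : I.Minimal j) (q : List I.E) (X : B) (y : (D.obj i).obj X)
      (z : (D.obj j).obj X) (h : Evals D X q ⟨i, y⟩ ⟨j, z⟩) :
      (leg i).app X y = Quot.mk (R.rel X) ⟨⟨j, hj⟩, z⟩ :=
    Congruence.mk_eq_mk_of_evals hR _ hj (evals_pathMap (hp i) y) h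
  have hcomm (e : I.E) : D.map e ≫ leg (I.t e) = leg (I.s e) := by
    ext X y
    exact (leg_app _ _ _ _ X y _ (.cons e y (evals_pathMap (hp (I.t e)) _))).symm
  have ι_π_eq_leg (j : I.V) (hj : I.Minimal j) : minCoprodι D hj ≫ R.π = leg j := by
    ext X z
    exact (leg_app j j hj [] X z z (.nil _)).symm
  refine ⟨leg, hcomm, fun i hi X y => leg_app i i hi [] X y y (.nil _),
    fun i j hj q _ => leg_app i j hj q, fun c => ?_⟩
  have hker : ∀ X a b, R.rel X a b →
      (minCoprodDesc D c.leg).app X a = (minCoprodDesc D c.leg).app X b :=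
    hRsmall (Congruence.ker _) fun X a b => c.desc_app_eq_of_primaryRel
  refine ⟨R.lift _ hker, fun i => ?_, fun g hg => Congruence.hom_ext ?_⟩
  · simp only [leg, Category.assoc, Congruence.π_lift, minCoprodι_desc, c.pathMap_comp_leg]
  · rw [Congruence.π_lift]
    exact minCoprod_hom_ext fun j hj => by
      rw [← Category.assoc, ι_π_eq_leg, minCoprodι_desc]
      exact hg j

/-- **The specialized construction of colimits** (Sect. 6.3).  Let `I` be a finite
directed multigraph without directed cycles and `D : I → Set^B` a diagram.  Let `≅`
be the smallest congruence on `∐_{i∈Min(I)} D_i` containing all primary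
identifications.  Then the family `κ` with `κ_i = [-]_≅ ∘ ⊆_i` for minimal `i` and
`κ_i = κ_j ∘ D_p` for any edge sequence `p` from `i` to a minimal `j` is well defined
(independent of the choice of `p`) and is a colimiting cocone
`D ⇒ Δ((∐_{i∈Min(I)} D_i)/≅)`. -/
theorem specialized_colimit_construction
    {B : Type u} [SmallCategory B] {I : MGraph.{u}} [Finite I.V] [Finite I.E]
    (hnc : ¬ I.HasDirectedCycle)
    (D : GDiagram I (B ⥤ Type u))
    (R : Congruence (minCoprod D))
    (hR : ∀ X a b, PrimaryRel D X a b → R.rel X a b)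
    (hRsmall : ∀ R' : Congruence (minCoprod D),
      (∀ X a b, PrimaryRel D X a b → R'.rel X a b) →
      ∀ X a b, R.rel X a b → R'.rel X a b) :
    ∃ (leg : (i : I.V) → (D.obj i ⟶ R.quotient))
      (hcomm : ∀ e : I.E, D.map e ≫ leg (I.t e) = leg (I.s e)),
      (∀ (i : I.V) (hi : I.Minimal i) (X : B) (y : (D.obj i).obj X),
          (leg i).app X y = Quot.mk (R.rel X) ⟨⟨i, hi⟩, y⟩) ∧
      (∀ (i j : I.V) (hj : I.Minimal j) (p : List I.E), IsEdgeSeq I p i j →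
          ∀ (X : B) (y : (D.obj i).obj X) (z : (D.obj j).obj X),
            Evals D X p ⟨i, y⟩ ⟨j, z⟩ →
            (leg i).app X y = Quot.mk (R.rel X) ⟨⟨j, hj⟩, z⟩) ∧
      GCocone.IsColimit { pt := R.quotient, leg := leg, comm := hcomm } :=
  specialized_colimit_construction_general hnc D R hR hRsmall
end

section
/- In the category Set, the cofork on the parallel pair consisting of the two identity maps on a one-element set {*}, with apex {*} and both structure maps the identity, is a coequalizer but is not a Van Kampen cocone: the cartesian natural transformation from the parallel pair (k, id) on a two-element set {a,b} (k the non-identity bijection) down to the pair (id, id) on {*} has colimit a one-element set, and pulling the induced map back along the coequalizer cocone does not recover the original cartesian transformation. -/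
open CategoryTheory CategoryTheory.Limits

universe u

section Shapes

/-- Vertices of the span shape graph `1 ← 0 → 2`. -/
inductive SpV : Type u | z | p | q

/-- Edges of the span shape graph. -/
inductive SpE : Type u | l | r

/-- The span shape graph `1 ←l− 0 −r→ 2`. -/
def spanGraph : MGraph.{u} :=
  ⟨SpV, SpE, fun _ => .z, fun e => match e with | .l => .p | .r => .q⟩

/-- The span diagram determined by `h₁ : D0 ⟶ D1` and `h₂ : D0 ⟶ D2`. -/
def spanDiagram {C : Type*} [Category C] {D0 D1 D2 : C} (h₁ : D0 ⟶ D1) (h₂ : D0 ⟶ D2) :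
    GDiagram spanGraph.{u} C where
  obj v := match v with | .z => D0 | .p => D1 | .q => D2
  map e := match e with | .l => h₁ | .r => h₂

/-- Vertices of the parallel pair shape graph `1 ⇉ 2`. -/
inductive PV : Type u | one | two

/-- Edges of the parallel pair shape graph `1 ⇉ 2`. -/
inductive PE : Type u | d | d'

/-- The parallel pair shape graph `Δ = (1 ⇉ 2)` with edges `d`, `d'`. -/
def parGraph : MGraph.{u} := ⟨PV, PE, fun _ => .one, fun _ => .two⟩

/-- The parallel pair diagram determined by `f g : A ⟶ A'` (`d ↦ f`, `d' ↦ g`). -/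
def parDiagram {C : Type*} [Category C] {A A' : C} (f g : A ⟶ A') :
    GDiagram parGraph.{u} C where
  obj v := match v with | .one => A | .two => A'
  map e := match e with | .d => f | .d' => g

end Shapes

/-!
The apex of the cocone is terminal, so `Over c.pt` is just `Type`. If `c` were Van Kampen, the
cartesian transformation `τ` from `(k, id)` would be the pullback of some `σ : Over c.pt`, with
`σ.left` a two-element set, and the equivalence would identify the four endomorphisms of
`σ.left` with the endomorphisms of `τ`; but these are determined by where they send one point,
since they must commute with `k`. Directly: a colimit `cE` of `(k, id)` is a point, so its leg
out of the two-element set is not injective and cannot be a pullback of the identity.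
-/

def CartObj.evaluation {I : MGraph.{u}} {C : Type*} [Category C] {D : GDiagram I C} (i : I.V) :
    CartObj D ⥤ C where
  obj A := A.diag.obj i
  map φ := φ.1.app i

lemma GHom.cartesian_of_isIso {I : MGraph.{u}} {C : Type*} [Category C] {F G : GDiagram I C}
    (τ : GHom F G) (hF : ∀ e, IsIso (F.map e)) (hG : ∀ e, IsIso (G.map e)) : τ.Cartesian :=
  fun e => IsPullback.of_horiz_isIso ⟨τ.naturality e⟩

lemma GCocone.IsVanKampen.exists_iso_of_isIso_leg {I : MGraph.{u}} {C : Type*} [Category C]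
    {D : GDiagram I C} {c : GCocone D} (hc : c.IsVanKampen) (T : CartObj D) (i : I.V)
    [IsIso (c.leg i)] :
    ∃ σ : Over c.pt, Nonempty (σ.left ≅ T.diag.obj i) ∧ Nonempty ((σ ⟶ σ) ≃ (T ⟶ T)) := by
  obtain ⟨F, π, hπ, -, hF⟩ := hc
  let e : F.obj (F.objPreimage T) ≅ T := F.objObjPreimageIso T
  have : IsIso (π (F.objPreimage T) i) := (hπ _ i).isIso_fst_of_isIso
  exact ⟨F.objPreimage T,
    ⟨(asIso (π _ i)).symm ≪≫ (CartObj.evaluation i).mapIso e⟩,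
    ⟨(Functor.FullyFaithful.ofFullyFaithful F).homEquiv.trans (e.homCongr e)⟩⟩

lemma parDiagram_eq_of_mono_leg {C : Type*} [Category C] {A B : C} {f g : A ⟶ B}
    (c : GCocone (parDiagram.{u} f g)) [Mono (c.leg .two)] : f = g :=
  (cancel_mono (c.leg .two)).1 ((c.comm .d).trans (c.comm .d').symm)

lemma GCocone.isColimit_of_subsingleton {A B : Type} {f g : A ⟶ B}
    (c : GCocone (parDiagram.{u} f g)) [Subsingleton c.pt] (b₀ : B)
    (hconst : ∀ {X : Type} (k : B ⟶ X), f ≫ k = g ≫ k → ∀ b, k b = k b₀) : c.IsColimit := by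
  intro c'
  have hc' : ∀ b, c'.leg .two b = c'.leg .two b₀ :=
    hconst _ ((c'.comm .d).trans (c'.comm .d').symm)
  refine ⟨TypeCat.ofHom fun _ => c'.leg .two b₀, fun i => ?_, fun y hy => ?_⟩
  · cases i with
    | one => ext a; exact (hc' (g a)).symm.trans (types_congr_hom (c'.comm .d') a)
    | two => ext b; exact (hc' b).symm
  · ext x
    rw [Subsingleton.elim x (c.leg .two b₀)]
    exact types_congr_hom (hy .two) b₀

lemma Bool.apply_eq_apply_true_of_not_comp {X : Type} {k : Bool ⟶ X}
    (hk : TypeCat.ofHom (fun b : Bool => !b) ≫ k = 𝟙 Bool ≫ k) (b : Bool) : k b = k true := by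
  cases b
  · exact types_congr_hom hk true
  · rfl

abbrev notIdPair : GDiagram parGraph.{0} Type :=
  parDiagram (TypeCat.ofHom (fun b : Bool => !b)) (𝟙 Bool)

lemma GHom.ext_of_app_two_true {φ ψ : GHom notIdPair notIdPair}
    (h : φ.app .two true = ψ.app .two true) : φ = ψ := by
  have hone : ∀ (χ : GHom notIdPair notIdPair) (b : Bool), χ.app .one b = χ.app .two b :=
    fun χ b => (types_congr_hom (χ.naturality .d') b).symm
  have hfalse : ∀ χ : GHom notIdPair notIdPair, χ.app .two false = !χ.app .two true := fun χ =>
    (types_congr_hom (χ.naturality .d) true).trans (congrArg (!·) (hone χ true))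
  have htwo : ∀ b, φ.app .two b = ψ.app .two b := by
    intro b
    cases b
    · rw [hfalse φ, hfalse ψ, h]
    · exact h
  refine GHom.ext (funext fun i => ?_)
  cases i <;> ext b
  · exact (hone φ b).trans ((htwo b).trans (hone ψ b).symm)
  · exact htwo b

lemma GCocone.not_isVanKampen_of_isTerminal
    {c : GCocone (parDiagram.{0} (𝟙 (PUnit : Type)) (𝟙 (PUnit : Type)))}
    (hterm : IsTerminal c.pt) [IsIso (c.leg .two)]
    (τ : GHom notIdPair (parDiagram (𝟙 PUnit) (𝟙 PUnit))) (hτ : τ.Cartesian) : ¬ c.IsVanKampen := by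
  intro hVK
  obtain ⟨σ, ⟨eσ⟩, ⟨eEnd⟩⟩ := hVK.exists_iso_of_isIso_leg ⟨_, τ, hτ⟩ .two
  let endσ : (Bool → Bool) ≃ (σ ⟶ σ) :=
    let eσ' : σ.left ≃ Bool := eσ.toEquiv
    (eσ'.arrowCongr eσ').symm.trans
      (TypeCat.homEquiv.symm.trans
        (Over.equivalenceOfIsTerminal hterm).fullyFaithfulFunctor.homEquiv.symm)
  have hinj : Function.Injective fun φ : Bool → Bool => (eEnd (endσ φ)).1.app .two true :=
    fun φ ψ h => endσ.injective (eEnd.injective (Subtype.ext (GHom.ext_of_app_two_true h)))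
  simpa using Fintype.card_le_of_injective (β := Bool) _ hinj

/-- **A coequalizer in `Set` which is not Van Kampen** (the example (3.3) of
Sect. 3.1).  In `Set`, the cofork on the parallel pair of identities on the
one-element set, with apex the one-element set and identity structure maps, is a
coequalizer but not a Van Kampen cocone: the cartesian transformation from the
parallel pair `(k, id)` on the two-element set (`k` the non-identity bijection) has
colimit a one-element set, and pulling the induced map back along the coequalizer
cocone does not recover the original cartesian transformation. -/
theorem set_coequalizer_identities_not_vanKampen
    (c : GCocone (parDiagram.{0} (𝟙 PUnit) (𝟙 PUnit)))
    (hc : c = { pt := PUnit,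
                leg := fun v => match v with
                  | .one => TypeCat.ofHom (fun _ => PUnit.unit)
                  | .two => TypeCat.ofHom (fun _ => PUnit.unit),
                comm := fun e => match e with | .d => rfl | .d' => rfl })
    (τ : GHom (parDiagram (TypeCat.ofHom (fun b : Bool => !b)) (𝟙 Bool))
              (parDiagram (𝟙 PUnit) (𝟙 PUnit)))
    (hτ : τ = { app := fun v => match v with
                  | .one => TypeCat.ofHom (fun _ => PUnit.unit)
                  | .two => TypeCat.ofHom (fun _ => PUnit.unit),
                naturality := fun e => match e with | .d => rfl | .d' => rfl }) :
    c.IsColimit ∧ ¬ c.IsVanKampen ∧ τ.Cartesian ∧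
    (∃ cE : GCocone (parDiagram (TypeCat.ofHom (fun b : Bool => !b)) (𝟙 Bool)),
        cE.IsColimit ∧ Nonempty (cE.pt ≃ PUnit)) ∧
    (∀ cE : GCocone (parDiagram (TypeCat.ofHom (fun b : Bool => !b)) (𝟙 Bool)), cE.IsColimit →
      ∀ u : cE.pt ⟶ c.pt, (∀ i, cE.leg i ≫ u = τ.app i ≫ c.leg i) →
        ¬ (IsPullback (cE.leg PV.one) (τ.app PV.one) u (c.leg PV.one) ∧
           IsPullback (cE.leg PV.two) (τ.app PV.two) u (c.leg PV.two))) := by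
  have : Subsingleton c.pt := by subst hc; exact inferInstanceAs (Subsingleton PUnit)
  have : IsIso (c.leg .two) := by
    subst hc
    exact (isIso_iff_bijective _).2 ⟨fun _ _ _ => rfl, fun y => ⟨y, rfl⟩⟩
  have hnot : IsIso (TypeCat.ofHom (fun b : Bool => !b)) :=
    (isIso_iff_bijective _).2 Bool.involutive_not.bijective
  have hcart : τ.Cartesian :=
    τ.cartesian_of_isIso (fun e => by cases e; exacts [hnot, IsIso.id _])
      (fun e => by cases e <;> exact IsIso.id _)
  refine ⟨c.isColimit_of_subsingleton PUnit.unit fun k _ _ => congrArg k (Subsingleton.elim _ _),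
    GCocone.not_isVanKampen_of_isTerminal (by subst hc; exact Types.isTerminalPUnit) τ hcart,
    hcart, ⟨⟨PUnit, fun _ => TypeCat.ofHom fun _ => PUnit.unit, fun _ => rfl⟩,
      GCocone.isColimit_of_subsingleton _ true fun _ => Bool.apply_eq_apply_true_of_not_comp,
      ⟨Equiv.punitEquivPUnit⟩⟩, ?_⟩
  rintro cE - u - ⟨-, hpb⟩
  have : IsIso (cE.leg .two) := hpb.isIso_fst_of_isIso
  exact Bool.not_ne_self true (types_congr_hom (parDiagram_eq_of_mono_leg cE) true)
end

section
/- Let HSet be the category whose objects are pairs (x, A) with A a set and x ∈ A ∪ {⊥} (a set with at most one marked element), and whose morphisms f : (x, A) → (y, B) are total maps f : A → B such that x ≠ ⊥ implies y ≠ ⊥ and f(x) = y. In HSet, the pushout of the span (2,{2}) ← (⊥,∅) → (1,{1}) is the one-element object (*,{*}), and this pushout square is not a Van Kampen colimit: the commutative cube with this pushout at the bottom, top face the pushout (⊥,{1,2}) of (⊥,{2}) ← (⊥,∅) → (⊥,{1}), and vertical maps the evident underlying-identity morphisms has pullback back faces and a pushout top face, but its front faces are not pullbacks. -/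
open CategoryTheory CategoryTheory.Limits

universe u

section VKSquare

variable {C : Type*} [Category C]

/-- The (cube-style) Van Kampen property of a pushout square, given as a cocone `c`
over the span diagram of `(h₁, h₂)`: for every commutative cube over the square
whose back faces are pullbacks, the top face is a pushout if and only if the two
front faces are pullbacks. -/
def IsVKSquare {D0 D1 D2 : C} (h₁ : D0 ⟶ D1) (h₂ : D0 ⟶ D2)
    (c : GCocone (spanDiagram.{u} h₁ h₂)) : Prop :=
  ∀ {E0 E1 E2 : C} (g₁ : E0 ⟶ E1) (g₂ : E0 ⟶ E2)
    (c' : GCocone (spanDiagram.{u} g₁ g₂))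
    (α0 : E0 ⟶ D0) (α1 : E1 ⟶ D1) (α2 : E2 ⟶ D2) (u : c'.pt ⟶ c.pt),
    g₁ ≫ α1 = α0 ≫ h₁ → g₂ ≫ α2 = α0 ≫ h₂ →
    c'.leg SpV.z ≫ u = α0 ≫ c.leg SpV.z →
    c'.leg SpV.p ≫ u = α1 ≫ c.leg SpV.p →
    c'.leg SpV.q ≫ u = α2 ≫ c.leg SpV.q →
    IsPullback g₁ α0 α1 h₁ → IsPullback g₂ α0 α2 h₂ →
    (c'.IsColimit ↔
      (IsPullback (c'.leg SpV.p) α1 u (c.leg SpV.p) ∧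
       IsPullback (c'.leg SpV.q) α2 u (c.leg SpV.q)))

end VKSquare
section HSetExample

/-- The category `HSet` of sets with at most one marked element: objects are pairs of
a set and an optional marked element; morphisms are total maps preserving the marked
element whenever the domain has one. -/
structure HSet : Type 1 where
  carrier : Type
  mark : Option carrier

/-- Morphisms of `HSet`. -/
@[ext]
structure HSet.Hom (A B : HSet) where
  toFun : A.carrier → B.carrier
  map_mark : ∀ a, A.mark = some a → B.mark = some (toFun a)

instance : Category HSet where
  Hom := HSet.Hom
  id A := ⟨id, fun _ h => h⟩
  comp f g := ⟨g.toFun ∘ f.toFun, fun a h => g.map_mark _ (f.map_mark a h)⟩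
  id_comp f := HSet.Hom.ext rfl
  comp_id f := HSet.Hom.ext rfl
  assoc f g h := HSet.Hom.ext rfl

/-- `(⊥, ∅)`. -/
def hsEmpty : HSet := ⟨Empty, none⟩
/-- `(2, {2})`. -/
def hsM2 : HSet := ⟨PUnit, some PUnit.unit⟩
/-- `(1, {1})`. -/
def hsM1 : HSet := ⟨PUnit, some PUnit.unit⟩
/-- `(*, {*})`. -/
def hsApex : HSet := ⟨PUnit, some PUnit.unit⟩
/-- `(⊥, {2})`. -/
def hsU2 : HSet := ⟨PUnit, none⟩
/-- `(⊥, {1})`. -/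
def hsU1 : HSet := ⟨PUnit, none⟩
/-- `(⊥, {1, 2})`. -/
def hsU12 : HSet := ⟨Bool, none⟩

/-- `(⊥,∅) → (2,{2})`. -/
def h₁ : hsEmpty ⟶ hsM2 := ⟨fun a => a.elim, fun a _ => a.elim⟩
/-- `(⊥,∅) → (1,{1})`. -/
def h₂ : hsEmpty ⟶ hsM1 := ⟨fun a => a.elim, fun a _ => a.elim⟩
/-- `(⊥,∅) → (⊥,{2})`. -/
def g₁ : hsEmpty ⟶ hsU2 := ⟨fun a => a.elim, fun a _ => a.elim⟩
/-- `(⊥,∅) → (⊥,{1})`. -/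
def g₂ : hsEmpty ⟶ hsU1 := ⟨fun a => a.elim, fun a _ => a.elim⟩
/-- `(2,{2}) → (*,{*})`. -/
def κ₁ : hsM2 ⟶ hsApex := ⟨fun _ => PUnit.unit, fun _ h => h⟩
/-- `(1,{1}) → (*,{*})`. -/
def κ₂ : hsM1 ⟶ hsApex := ⟨fun _ => PUnit.unit, fun _ h => h⟩
/-- `(⊥,{2}) → (⊥,{1,2})`. -/
def lam₁ : hsU2 ⟶ hsU12 := ⟨fun _ => false, fun _ h => nomatch h⟩
/-- `(⊥,{1}) → (⊥,{1,2})`. -/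
def lam₂ : hsU1 ⟶ hsU12 := ⟨fun _ => true, fun _ h => nomatch h⟩
/-- The vertical morphism `(⊥,{2}) → (2,{2})` with identity underlying map. -/
def v₁ : hsU2 ⟶ hsM2 := ⟨id, fun _ h => nomatch h⟩
/-- The vertical morphism `(⊥,{1}) → (1,{1})` with identity underlying map. -/
def v₂ : hsU1 ⟶ hsM1 := ⟨id, fun _ h => nomatch h⟩
/-- The vertical morphism `(⊥,{1,2}) → (*,{*})`. -/
def vS : hsU12 ⟶ hsApex := ⟨fun _ => PUnit.unit, fun _ h => nomatch h⟩

/-- The bottom pushout cocone: the pushout of `(2,{2}) ← (⊥,∅) → (1,{1})` with apex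
`(*,{*})`. -/
def cBot : GCocone (spanDiagram.{0} h₁ h₂) where
  pt := hsApex
  leg v := match v with
    | .z => h₁ ≫ κ₁
    | .p => κ₁
    | .q => κ₂
  comm e := match e with
    | .l => rfl
    | .r => HSet.Hom.ext (funext fun a => a.elim)

/-- The top cocone: the pushout of `(⊥,{2}) ← (⊥,∅) → (⊥,{1})` with apex
`(⊥,{1,2})`. -/
def cTop : GCocone (spanDiagram.{0} g₁ g₂) where
  pt := hsU12
  leg v := match v with
    | .z => g₁ ≫ lam₁
    | .p => lam₁
    | .q => lam₂
  comm e := match e with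
    | .l => rfl
    | .r => HSet.Hom.ext (funext fun a => a.elim)

section Proofs

lemma hom_to_empty_eq {X : HSet} (f g : X ⟶ hsEmpty) : f = g :=
  HSet.Hom.ext (funext fun a => (f.toFun a).elim)

lemma back_pullback₁ : IsPullback g₁ (𝟙 hsEmpty) v₁ h₁ := by
  have w : g₁ ≫ v₁ = 𝟙 hsEmpty ≫ h₁ := HSet.Hom.ext (funext fun a => a.elim)
  refine IsPullback.of_isLimit' ⟨w⟩ (PullbackCone.IsLimit.mk _ (fun s => s.snd) ?_ ?_ ?_)
  · intro s
    exact HSet.Hom.ext (funext fun a => (s.snd.toFun a).elim)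
  · intro s
    exact HSet.Hom.ext (funext fun a => (s.snd.toFun a).elim)
  · intro s m _ _
    exact HSet.Hom.ext (funext fun a => (m.toFun a).elim)

lemma back_pullback₂ : IsPullback g₂ (𝟙 hsEmpty) v₂ h₂ := by
  have w : g₂ ≫ v₂ = 𝟙 hsEmpty ≫ h₂ := HSet.Hom.ext (funext fun a => a.elim)
  refine IsPullback.of_isLimit' ⟨w⟩ (PullbackCone.IsLimit.mk _ (fun s => s.snd) ?_ ?_ ?_)
  · intro s
    exact HSet.Hom.ext (funext fun a => (s.snd.toFun a).elim)
  · intro s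
    exact HSet.Hom.ext (funext fun a => (s.snd.toFun a).elim)
  · intro s m _ _
    exact HSet.Hom.ext (funext fun a => (m.toFun a).elim)

lemma cBot_isColimit : cBot.IsColimit := by
  intro c'
  have hmark : HSet.mark c'.pt = some ((c'.leg SpV.p).toFun PUnit.unit) :=
    (c'.leg SpV.p).map_mark PUnit.unit rfl
  have hmark' : HSet.mark c'.pt = some ((c'.leg SpV.q).toFun PUnit.unit) :=
    (c'.leg SpV.q).map_mark PUnit.unit rfl
  have hpq : (c'.leg SpV.p).toFun PUnit.unit = (c'.leg SpV.q).toFun PUnit.unit :=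
    Option.some.inj (hmark ▸ hmark')
  refine ⟨⟨fun _ => (c'.leg SpV.p).toFun PUnit.unit, fun a h => hmark⟩, ?_, ?_⟩
  · intro i
    cases i with
    | z => exact HSet.Hom.ext (funext fun a => a.elim)
    | p => exact HSet.Hom.ext (funext fun a => rfl)
    | q => exact HSet.Hom.ext (funext fun a => hpq)
  · intro f hf
    refine HSet.Hom.ext (funext fun a => ?_)
    have := congrArg (fun h => HSet.Hom.toFun h PUnit.unit) (hf SpV.p)
    exact this

lemma cTop_isColimit : cTop.IsColimit := by
  intro c'
  refine ⟨⟨fun b => cond b ((c'.leg SpV.q).toFun PUnit.unit)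
      ((c'.leg SpV.p).toFun PUnit.unit), fun a h => nomatch h⟩, ?_, ?_⟩
  · intro i
    cases i with
    | z => exact HSet.Hom.ext (funext fun a => a.elim)
    | p => exact HSet.Hom.ext (funext fun a => rfl)
    | q => exact HSet.Hom.ext (funext fun a => rfl)
  · intro f hf
    refine HSet.Hom.ext (funext fun b => ?_)
    cases b with
    | false => exact congrArg (fun h => HSet.Hom.toFun h PUnit.unit) (hf SpV.p)
    | true => exact congrArg (fun h => HSet.Hom.toFun h PUnit.unit) (hf SpV.q)

lemma not_front₁ : ¬ IsPullback (cTop.leg SpV.p) v₁ vS (cBot.leg SpV.p) := by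
  intro h
  have w : (𝟙 hsU12) ≫ vS = (⟨fun _ => PUnit.unit, fun a hh => nomatch hh⟩ :
      hsU12 ⟶ hsM2) ≫ cBot.leg SpV.p := HSet.Hom.ext (funext fun _ => rfl)
  have hl := h.lift_fst (𝟙 hsU12) _ w
  have := congrArg (fun f => HSet.Hom.toFun f true) hl
  exact Bool.noConfusion this

lemma not_front₂ : ¬ IsPullback (cTop.leg SpV.q) v₂ vS (cBot.leg SpV.q) := by
  intro h
  have w : (𝟙 hsU12) ≫ vS = (⟨fun _ => PUnit.unit, fun a hh => nomatch hh⟩ :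
      hsU12 ⟶ hsM1) ≫ cBot.leg SpV.q := HSet.Hom.ext (funext fun _ => rfl)
  have hl := h.lift_fst (𝟙 hsU12) _ w
  have := congrArg (fun f => HSet.Hom.toFun f false) hl
  exact Bool.noConfusion this

lemma not_vk : ¬ IsVKSquare.{0} h₁ h₂ cBot := by
  intro hvk
  have := (hvk g₁ g₂ cTop (𝟙 hsEmpty) v₁ v₂ vS
    (HSet.Hom.ext (funext fun a => a.elim))
    (HSet.Hom.ext (funext fun a => a.elim))
    (HSet.Hom.ext (funext fun a => a.elim))
    (HSet.Hom.ext (funext fun _ => rfl))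
    (HSet.Hom.ext (funext fun _ => rfl))
    back_pullback₁ back_pullback₂).mp cTop_isColimit
  exact not_front₁ this.1

end Proofs

/-- **A pushout in `HSet` which is not a Van Kampen colimit** (Fig. 2, Sect. 5.1).
In `HSet` the pushout of the span `(2,{2}) ← (⊥,∅) → (1,{1})` is the one-element
object `(*,{*})`, and this square is not Van Kampen: the commutative cube with this
pushout at the bottom, top face the pushout `(⊥,{1,2})` of
`(⊥,{2}) ← (⊥,∅) → (⊥,{1})`, and vertical maps the evident underlying-identity
morphisms, has pullback back faces and a pushout top face, but its front faces are
not pullbacks. -/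
theorem hset_pushout_not_vanKampen :
    cBot.IsColimit ∧
    ¬ IsVKSquare.{0} h₁ h₂ cBot ∧
    IsPullback g₁ (𝟙 hsEmpty) v₁ h₁ ∧
    IsPullback g₂ (𝟙 hsEmpty) v₂ h₂ ∧
    cTop.IsColimit ∧
    ¬ IsPullback (cTop.leg SpV.p) v₁ vS (cBot.leg SpV.p) ∧
    ¬ IsPullback (cTop.leg SpV.q) v₂ vS (cBot.leg SpV.q) := by
  exact ⟨cBot_isColimit, not_vk, back_pullback₁, back_pullback₂,
    cTop_isColimit, not_front₁, not_front₂⟩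

end HSetExample
end
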